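/- arXiv:2308.07663 — 5 statements merged into one kernel-verified Lean document; each statement's English description precedes it below -/
import Mathlib

section
/- Let u, v, q be probability vectors in ℝ^m with q strictly positive componentwise and u - v ≠ 0. Then Σᵢ (uᵢ - vᵢ)²/qᵢ ≤ (maxᵢ |uᵢ-vᵢ|/qᵢ) / ‖u-v‖₁ · 2 · D_KL(u‖v). -/
open Finset

section helpers
open Real Set


noncomputable def gP (t : ℝ) : ℝ := t * Real.log t - t + 1 - 3/2 * (t-1)^2/(t+2)
noncomputable def gP1 (t : ℝ) : ℝ := Real.log t - 3/2 * ((t-1)*(t+5))/(t+2)^2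

lemma hasDeriv_gP {t : ℝ} (ht : 0 < t) : HasDerivAt gP (gP1 t) t := by
  have h2 : (t + 2) ≠ 0 := by positivity
  have hA : HasDerivAt (fun t : ℝ => t * Real.log t) (Real.log t + 1) t :=
    Real.hasDerivAt_mul_log ht.ne'
  have hB : HasDerivAt (fun t : ℝ => 3/2 * (t-1)^2/(t+2))
      ((3/2 * (2*(t-1)) * (t+2) - 3/2*(t-1)^2 * 1)/(t+2)^2) t := by
    have hn : HasDerivAt (fun t : ℝ => 3/2 * (t-1)^2) (3/2 * (2*(t-1))) t := by
      have := ((hasDerivAt_id t).sub_const 1).pow 2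
      simpa using this.const_mul (3/2 : ℝ)
    have hd : HasDerivAt (fun t : ℝ => t + 2) 1 t := (hasDerivAt_id t).add_const 2
    exact hn.div hd h2
  have := (hA.sub (hasDerivAt_id t)).add_const 1 |>.sub hB
  refine this.congr_deriv ?_
  unfold gP1
  field_simp
  ring

lemma hasDeriv_gP1 {t : ℝ} (ht : 0 < t) : HasDerivAt gP1 (t⁻¹ - 27/(t+2)^3) t := by
  have h2 : ((t + 2)^2) ≠ 0 := by positivity
  have hA : HasDerivAt Real.log t⁻¹ t := Real.hasDerivAt_log ht.ne'
  have hn : HasDerivAt (fun t : ℝ => 3/2 * ((t-1)*(t+5))) (3/2 * ((t-1) + (t+5))) t := by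
    have := (((hasDerivAt_id t).sub_const 1).mul ((hasDerivAt_id t).add_const 5))
    simpa [mul_comm, add_comm] using this.const_mul (3/2 : ℝ)
  have hd : HasDerivAt (fun t : ℝ => (t+2)^2) (2*(t+2)) t := by
    have := ((hasDerivAt_id t).add_const 2).pow 2
    exact this.congr_deriv (by simp [mul_comm])
  have hB := hn.div hd h2
  have := hA.sub hB
  refine this.congr_deriv ?_
  have h2' : (t+2) ≠ 0 := by positivity
  field_simp
  ring

lemma gP_nonneg {t : ℝ} (ht : 0 ≤ t) : 0 ≤ gP t := by
  rcases eq_or_lt_of_le ht with h0 | ht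
  · simp [gP, ← h0]; norm_num
  have hmono : MonotoneOn gP1 (Ioi (0:ℝ)) := by
    apply monotoneOn_of_deriv_nonneg (convex_Ioi 0)
    · exact fun x hx => (hasDeriv_gP1 hx).continuousAt.continuousWithinAt
    · intro x hx
      rw [interior_Ioi] at hx
      exact (hasDeriv_gP1 hx).differentiableAt.differentiableWithinAt
    · intro x hx
      rw [interior_Ioi] at hx
      rw [(hasDeriv_gP1 hx).deriv]
      have hx3 : (0:ℝ) < (x+2)^3 := pow_pos (by linarith [mem_Ioi.1 hx]) 3
      have hx0 : (0:ℝ) < x := hx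
      rw [sub_nonneg, div_le_iff₀ hx3, inv_mul_eq_div, le_div_iff₀ hx0]
      nlinarith [sq_nonneg (x-1), hx0.le]
  have hg1 : gP1 1 = 0 := by simp [gP1]
  have key : ∀ x ∈ Ioi (0:ℝ), gP 1 ≤ gP x := by
    intro x hx
    rcases le_total 1 x with hx1 | hx1
    · have hmg : MonotoneOn gP (Ici (1:ℝ)) := by
        apply monotoneOn_of_deriv_nonneg (convex_Ici 1)
        · exact fun y hy => (hasDeriv_gP (lt_of_lt_of_le one_pos hy)).continuousAt.continuousWithinAt
        · intro y hy
          rw [interior_Ici] at hy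
          exact (hasDeriv_gP (lt_trans one_pos hy)).differentiableAt.differentiableWithinAt
        · intro y hy
          rw [interior_Ici] at hy
          rw [(hasDeriv_gP (lt_trans one_pos hy)).deriv, ← hg1]
          exact hmono (mem_Ioi.2 one_pos) (mem_Ioi.2 (lt_trans one_pos hy)) hy.le
      exact hmg (self_mem_Ici) hx1 hx1
    · have hmg : AntitoneOn gP (Ioc (0:ℝ) 1) := by
        apply antitoneOn_of_deriv_nonpos (convex_Ioc 0 1)
        · exact fun y hy => (hasDeriv_gP hy.1).continuousAt.continuousWithinAt
        · intro y hy
          rw [interior_Ioc] at hy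
          exact (hasDeriv_gP hy.1).differentiableAt.differentiableWithinAt
        · intro y hy
          rw [interior_Ioc] at hy
          rw [(hasDeriv_gP hy.1).deriv, ← hg1]
          exact hmono (mem_Ioi.2 hy.1) (mem_Ioi.2 one_pos) hy.2.le
      exact hmg ⟨hx, hx1⟩ ⟨one_pos, le_refl 1⟩ hx1
  have : gP 1 ≤ gP t := key t ht
  simpa [gP] using this

lemma pointwise_klP {a b : ℝ} (ha : 0 ≤ a) (hb : 0 ≤ b) (hab : b = 0 → a = 0) :
    3/2 * (a - b)^2 / (a + 2*b) ≤ a * Real.log (a/b) - a + b := by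
  rcases eq_or_lt_of_le hb with h0 | hb
  · have ha0 : a = 0 := hab h0.symm
    simp [ha0, ← h0]
  have key := gP_nonneg (t := a/b) (by positivity)
  rw [gP, sub_nonneg] at key
  have h1 : b * (3/2 * (a/b-1)^2/(a/b+2)) = 3/2 * (a - b)^2 / (a + 2*b) := by
    have h2 : a + 2*b ≠ 0 := by positivity
    field_simp
  have h2 : b * (a/b * Real.log (a/b) - a/b + 1) = a * Real.log (a/b) - a + b := by
    field_simp
  rw [← h1, ← h2]
  exact mul_le_mul_of_nonneg_left key hb.le

open Finset in
lemma discrete_pinsker {m : ℕ} (u v : Fin m → ℝ)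
    (hu0 : ∀ i, 0 ≤ u i) (hu1 : ∑ i, u i = 1)
    (hv0 : ∀ i, 0 ≤ v i) (hv1 : ∑ i, v i = 1)
    (hac : ∀ i, v i = 0 → u i = 0) :
    (∑ i, |u i - v i|)^2 / 2 ≤ ∑ i, u i * Real.log (u i / v i) := by
  set S := ∑ i, |u i - v i| with hS
  have hsum : ∑ i, u i * Real.log (u i / v i)
      = ∑ i, (u i * Real.log (u i / v i) - u i + v i) := by
    rw [Finset.sum_add_distrib, Finset.sum_sub_distrib, hu1, hv1]
    ring
  rw [hsum]
  have step1 : ∑ i, 3/2 * (u i - v i)^2 / (u i + 2*v i)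
      ≤ ∑ i, (u i * Real.log (u i / v i) - u i + v i) :=
    Finset.sum_le_sum fun i _ => pointwise_klP (hu0 i) (hv0 i) (hac i)
  refine le_trans ?_ step1
  -- Engel form on the support
  set s : Finset (Fin m) := Finset.univ.filter (fun i => 0 < u i + 2*v i) with hs
  have hzero : ∀ i, i ∉ s → u i = 0 ∧ v i = 0 := by
    intro i hi
    have hi' : ¬ (0 < u i + 2*v i) := fun h => hi (Finset.mem_filter.2 ⟨Finset.mem_univ i, h⟩)
    constructor <;> nlinarith [hu0 i, hv0 i]
  have hSs : ∑ i ∈ s, |u i - v i| = S := by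
    rw [hS]
    apply Finset.sum_subset (Finset.filter_subset _ _)
    intro i _ hni
    obtain ⟨h1, h2⟩ := hzero i hni
    simp [h1, h2]
  have hDs : ∑ i ∈ s, (u i + 2*v i) = 3 := by
    have : ∑ i ∈ s, (u i + 2*v i) = ∑ i, (u i + 2*v i) := by
      apply Finset.sum_subset (Finset.filter_subset _ _)
      intro i _ hni
      obtain ⟨h1, h2⟩ := hzero i hni
      simp [h1, h2]
    rw [this, Finset.sum_add_distrib, hu1, ← Finset.mul_sum, hv1]
    norm_num
  have engel : (∑ i ∈ s, |u i - v i|)^2 / ∑ i ∈ s, (u i + 2*v i)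
      ≤ ∑ i ∈ s, |u i - v i|^2 / (u i + 2*v i) := by
    apply Finset.sq_sum_div_le_sum_sq_div
    intro i hi
    exact (Finset.mem_filter.1 hi).2
  rw [hSs, hDs] at engel
  have habs : ∑ i ∈ s, |u i - v i|^2 / (u i + 2*v i)
      = ∑ i ∈ s, (u i - v i)^2 / (u i + 2*v i) := by
    refine Finset.sum_congr rfl fun i _ => by rw [sq_abs]
  rw [habs] at engel
  have hsub : ∑ i ∈ s, 3/2 * (u i - v i)^2 / (u i + 2*v i)
      ≤ ∑ i, 3/2 * (u i - v i)^2 / (u i + 2*v i) := by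
    apply Finset.sum_le_sum_of_subset_of_nonneg (Finset.filter_subset _ _)
    intro i _ _
    exact div_nonneg (by positivity) (by nlinarith [hu0 i, hv0 i])
  have hmul : ∑ i ∈ s, 3/2 * (u i - v i)^2 / (u i + 2*v i)
      = 3/2 * ∑ i ∈ s, (u i - v i)^2 / (u i + 2*v i) := by
    rw [Finset.mul_sum]
    exact Finset.sum_congr rfl fun i _ => by rw [mul_div_assoc]
  nlinarith [hsub, engel]

end helpers

/-- Kullback–Leibler divergence with values in the extended reals:
it is `⊤` unless `u` is absolutely continuous with respect to `v`. -/
noncomputable def klE {m : ℕ} (u v : Fin m → ℝ) : EReal :=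
  if ∀ i, v i = 0 → u i = 0 then ((∑ i, u i * Real.log (u i / v i) : ℝ) : EReal) else ⊤

theorem weighted_l2_pinsker_hoelder {m : ℕ} (u v q : Fin m → ℝ)
    (hu0 : ∀ i, 0 ≤ u i) (hu1 : ∑ i, u i = 1)
    (hv0 : ∀ i, 0 ≤ v i) (hv1 : ∑ i, v i = 1)
    (hq0 : ∀ i, 0 < q i) (hq1 : ∑ i, q i = 1)
    (hne : u ≠ v) :
    ((∑ i, (u i - v i) ^ 2 / q i : ℝ) : EReal)
      ≤ (((⨆ i, |u i - v i| / q i) / (∑ i, |u i - v i|) * 2 : ℝ) : EReal) * klE u v := by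
  obtain ⟨j, hj⟩ : ∃ j, u j ≠ v j := by
    by_contra h
    push_neg at h
    exact hne (funext h)
  haveI : Nonempty (Fin m) := ⟨j⟩
  set S : ℝ := ∑ i, |u i - v i| with hSdef
  set M : ℝ := ⨆ i, |u i - v i| / q i with hMdef
  have hS : 0 < S := by
    have h1 : 0 < |u j - v j| := abs_pos.2 (sub_ne_zero.2 hj)
    have := Finset.single_le_sum (f := fun i => |u i - v i|)
      (fun i _ => abs_nonneg _) (Finset.mem_univ j)
    linarith
  have hbdd : BddAbove (Set.range fun i => |u i - v i| / q i) :=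
    Set.Finite.bddAbove (Set.finite_range _)
  have hM : 0 < M := by
    have h1 : 0 < |u j - v j| / q j := div_pos (abs_pos.2 (sub_ne_zero.2 hj)) (hq0 j)
    exact lt_of_lt_of_le h1 (le_ciSup hbdd j)
  have hT : ∑ i, (u i - v i)^2 / q i ≤ M * S := by
    rw [hSdef, Finset.mul_sum]
    apply Finset.sum_le_sum
    intro i _
    have h1 : (u i - v i)^2 / q i = (|u i - v i| / q i) * |u i - v i| := by
      rw [div_mul_eq_mul_div, ← abs_mul, abs_mul_self, sq]
    rw [h1]
    exact mul_le_mul_of_nonneg_right (le_ciSup hbdd i) (abs_nonneg _)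
  unfold klE
  split_ifs with hac
  · have hkl := discrete_pinsker u v hu0 hu1 hv0 hv1 hac
    rw [← EReal.coe_mul, EReal.coe_le_coe_iff]
    have hc : 0 ≤ M / S * 2 := by positivity
    calc ∑ i, (u i - v i)^2 / q i ≤ M * S := hT
      _ = M / S * 2 * (S^2/2) := by field_simp
      _ ≤ M / S * 2 * (∑ i, u i * Real.log (u i / v i)) :=
          mul_le_mul_of_nonneg_left hkl hc
  · have hc : (0:ℝ) < M / S * 2 := by positivity
    rw [EReal.coe_mul_top_of_pos (by exact_mod_cast hc)]
    exact le_top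
end

section
/- Let u, v be probability vectors in ℝ^m with uᵢ > 0 and vᵢ > 0 for all i, and suppose α := (2/3) maxᵢ |uᵢ - vᵢ|/uᵢ < 1. Then ‖u - v‖₂² ≤ 2 ‖u‖_∞ / (1 - α) · D_KL(u‖v). -/
open Finset

lemma log_taylor_cubic {x : ℝ} (hx : -1 < x) :
    Real.log (1 + x) ≤ x - x ^ 2 / 2 + x ^ 3 / 3 := by
  set f : ℝ → ℝ := fun y => y - y ^ 2 / 2 + y ^ 3 / 3 - Real.log (1 + y) with hf
  have hderiv : ∀ y : ℝ, -1 < y → HasDerivAt f (1 - y + y ^ 2 - (1 + y)⁻¹) y := by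
    intro y hy
    have hy' : (1 : ℝ) + y ≠ 0 := by linarith
    have h1 : HasDerivAt (fun z : ℝ => 1 + z) 1 y := by
      simpa using (hasDerivAt_id y).const_add 1
    have h2 : HasDerivAt (fun z : ℝ => Real.log (1 + z)) ((1 + y)⁻¹ * 1) y :=
      (Real.hasDerivAt_log hy').comp y h1
    have h3 : HasDerivAt (fun z : ℝ => z - z ^ 2 / 2 + z ^ 3 / 3)
        (1 - (2 : ℕ) * y ^ 1 / 2 + (3 : ℕ) * y ^ 2 / 3) y :=
      ((hasDerivAt_id y).sub ((hasDerivAt_pow 2 y).div_const 2)).add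
        ((hasDerivAt_pow 3 y).div_const 3)
    have := h3.sub h2
    refine this.congr_deriv ?_
    push_cast
    ring
  have hcont : ∀ y : ℝ, -1 < y → ContinuousAt f y := fun y hy =>
    (hderiv y hy).continuousAt
  have hfx : 0 ≤ f x := by
    rcases le_or_gt 0 x with h | h
    · -- monotone on [0, x]
      have hmono : MonotoneOn f (Set.Icc 0 x) := by
        apply monotoneOn_of_deriv_nonneg (convex_Icc 0 x)
        · exact ContinuousOn.mono (fun y hy => (hcont y (by linarith [hy.1])).continuousWithinAt)
            (fun y hy => hy)
        · intro y hy
          rw [interior_Icc] at hy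
          exact ((hderiv y (by linarith [hy.1])).differentiableAt).differentiableWithinAt
        · intro y hy
          rw [interior_Icc] at hy
          rw [(hderiv y (by linarith [hy.1])).deriv]
          have hy1 : (0:ℝ) < 1 + y := by linarith [hy.1]
          have : 1 - y + y ^ 2 - (1 + y)⁻¹ = y ^ 3 / (1 + y) := by
            field_simp; ring
          rw [this]
          exact div_nonneg (pow_nonneg hy.1.le 3) hy1.le
      have := hmono (Set.left_mem_Icc.2 h) (Set.right_mem_Icc.2 h) h
      simpa [hf] using this
    · -- antitone on [x, 0]
      have hanti : AntitoneOn f (Set.Icc x 0) := by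
        apply antitoneOn_of_deriv_nonpos (convex_Icc x 0)
        · exact ContinuousOn.mono (fun y hy => (hcont y (by linarith [hy.1])).continuousWithinAt)
            (fun y hy => hy)
        · intro y hy
          rw [interior_Icc] at hy
          exact ((hderiv y (by linarith [hy.1])).differentiableAt).differentiableWithinAt
        · intro y hy
          rw [interior_Icc] at hy
          rw [(hderiv y (by linarith [hy.1])).deriv]
          have hy1 : (0:ℝ) < 1 + y := by linarith [hy.1]
          have : 1 - y + y ^ 2 - (1 + y)⁻¹ = y ^ 3 / (1 + y) := by
            field_simp; ring
          rw [this]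
          have : y ^ 3 ≤ 0 := by nlinarith [hy.2]
          exact div_nonpos_of_nonpos_of_nonneg this (le_of_lt hy1)
      have := hanti (Set.left_mem_Icc.2 h.le) (Set.right_mem_Icc.2 h.le) h.le
      simpa [hf] using this
  simp only [hf] at hfx
  linarith

theorem l2_pinsker_taylor {m : ℕ} (u v : Fin m → ℝ)
    (hu0 : ∀ i, 0 < u i) (hu1 : ∑ i, u i = 1)
    (hv0 : ∀ i, 0 < v i) (hv1 : ∑ i, v i = 1)
    (hα : (2 / 3 : ℝ) * (⨆ i, |u i - v i| / u i) < 1) :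
    ∑ i, (u i - v i) ^ 2
      ≤ 2 * (⨆ i, u i) / (1 - (2 / 3 : ℝ) * (⨆ i, |u i - v i| / u i)) *
        ∑ i, u i * Real.log (u i / v i) := by
  have hm : m ≠ 0 := by
    rintro rfl
    simp at hu1
  haveI : Nonempty (Fin m) := ⟨⟨0, Nat.pos_of_ne_zero hm⟩⟩
  set S : ℝ := ⨆ i, |u i - v i| / u i with hS
  set M : ℝ := ⨆ i, u i with hM
  have hle_S : ∀ i, |u i - v i| / u i ≤ S :=
    fun i => le_ciSup (f := fun i => |u i - v i| / u i)
      (Set.Finite.bddAbove (Set.finite_range _)) i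
  have hle_M : ∀ i, u i ≤ M :=
    fun i => le_ciSup (f := u) (Set.Finite.bddAbove (Set.finite_range _)) i
  have hS0 : 0 ≤ S := by
    have i := Classical.arbitrary (Fin m)
    exact le_trans (div_nonneg (abs_nonneg _) (hu0 i).le) (hle_S i)
  have hM0 : 0 < M := lt_of_lt_of_le (hu0 (Classical.arbitrary _)) (hle_M _)
  have hα1 : 0 < 1 - (2/3 : ℝ) * S := by linarith
  have key : ∀ i, (1 - (2/3 : ℝ) * S) * (u i - v i) ^ 2
      ≤ 2 * M * (u i * Real.log (u i / v i) - (u i - v i)) := by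
    intro i
    set a := u i with ha
    set b := v i with hb
    have ha0 : 0 < a := hu0 i
    have hb0 : 0 < b := hv0 i
    set x : ℝ := (b - a) / a with hx
    have hx1 : -1 < x := by
      rw [hx, neg_lt, ← neg_div, div_lt_one ha0]
      linarith
    have hax : a * x = b - a := by rw [hx]; field_simp
    have hxS : x ≤ S := by
      have habs : |x| = |a - b| / a := by
        rw [hx, abs_div, abs_of_pos ha0]
        congr 1
        rw [abs_sub_comm]
      exact le_trans (le_abs_self x) (habs ▸ hle_S i)
    have htay : a * Real.log (1 + x) ≤ a * (x - x ^ 2 / 2 + x ^ 3 / 3) :=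
      mul_le_mul_of_nonneg_left (log_taylor_cubic hx1) ha0.le
    have hlog : Real.log (a / b) = -Real.log (1 + x) := by
      have : (1 : ℝ) + x = b / a := by rw [hx]; field_simp; ring
      rw [this, Real.log_div hb0.ne' ha0.ne', Real.log_div ha0.ne' hb0.ne']
      ring
    rw [hlog]
    have hamb : a - b = -(a * x) := by linarith
    have hab2 : (a - b) ^ 2 = a ^ 2 * x ^ 2 := by rw [hamb]; ring
    have h3 := mul_le_mul_of_nonneg_left htay (by linarith : (0:ℝ) ≤ 2 * M)
    have h1 : 0 ≤ a * x ^ 2 * ((M - a) * (1 - 2/3 * S)) :=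
      mul_nonneg (mul_nonneg ha0.le (sq_nonneg x))
        (mul_nonneg (by linarith [hle_M i]) hα1.le)
    have h2 : 0 ≤ a * x ^ 2 * (M * (S - x)) :=
      mul_nonneg (mul_nonneg ha0.le (sq_nonneg x))
        (mul_nonneg hM0.le (by linarith))
    nlinarith [h1, h2, h3, hab2, hamb]
  have hsum := Finset.sum_le_sum (fun i (_ : i ∈ Finset.univ) => key i)
  rw [← Finset.mul_sum, ← Finset.mul_sum, Finset.sum_sub_distrib] at hsum
  have hzero : ∑ i, (u i - v i) = 0 := by
    rw [Finset.sum_sub_distrib, hu1, hv1]; ring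
  rw [hzero, sub_zero] at hsum
  rw [div_mul_eq_mul_div, le_div_iff₀ hα1]
  calc (∑ i, (u i - v i) ^ 2) * (1 - 2/3 * S)
      = (1 - 2/3 * S) * ∑ i, (u i - v i) ^ 2 := by ring
    _ ≤ 2 * M * ∑ i, u i * Real.log (u i / v i) := hsum
end

section
/- Let p ∈ ℝⁿ be a strictly positive probability vector and γ : [n] → [r] an assignment, with Π defined by Π_{ij} = pᵢ δ_{γ(i),γ(j)} / (Σ_l p_l δ_{γ(l),γ(i)}). Then the rank of Π equals the number of active latent states, i.e., rank(Π) = #γ([n]); in particular rank(Π) ≤ r. -/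
open Finset Matrix

/-- The matrix `Π` with `Π i j = pᵢ δ_{γ(i),γ(j)} / (∑ l, p_l δ_{γ(l),γ(i)})`. -/
noncomputable def dbmrProj {n r : ℕ} (p : Fin n → ℝ) (γ : Fin n → Fin r) :
    Matrix (Fin n) (Fin n) ℝ :=
  fun i j => (if γ i = γ j then p i else 0) / ∑ l, if γ l = γ i then p l else 0

theorem dbmrProj_rank {n r : ℕ} (p : Fin n → ℝ) (hp : ∀ i, 0 < p i)
    (hp1 : ∑ i, p i = 1) (γ : Fin n → Fin r) :
    (dbmrProj p γ).rank = (Finset.univ.image γ).card ∧ (dbmrProj p γ).rank ≤ r := by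
  classical
  set s : Fin r → ℝ := fun k => ∑ l, if γ l = k then p l else 0 with hs
  have hs_pos : ∀ i : Fin n, 0 < s (γ i) := by
    intro i
    have h1 : p i ≤ s (γ i) := by
      have := Finset.single_le_sum (f := fun l => if γ l = γ i then p l else 0)
        (fun l _ => by by_cases h : γ l = γ i <;> simp [h, (hp l).le]) (Finset.mem_univ i)
      simpa using this
    exact lt_of_lt_of_le (hp i) h1
  set w : Fin r → (Fin n → ℝ) := fun k i => (if γ i = k then p i else 0) / s k with hw
  -- columns of the matrix
  have hcol : ∀ j, (dbmrProj p γ)ᵀ j = w (γ j) := by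
    intro j
    funext i
    simp only [Matrix.transpose_apply, dbmrProj, hw]
    by_cases h : γ i = γ j
    · rw [h]
    · have h' : ¬ γ j = γ i := fun e => h e.symm
      simp [h, h']
  set S : Finset (Fin r) := Finset.univ.image γ with hS
  have hrange : Set.range (dbmrProj p γ)ᵀ = w '' (S : Set (Fin r)) := by
    ext v
    constructor
    · rintro ⟨j, rfl⟩
      exact ⟨γ j, by simp [hS], (hcol j).symm⟩
    · rintro ⟨k, hk, rfl⟩
      simp only [hS, Finset.coe_image, Finset.coe_univ, Set.image_univ] at hk
      obtain ⟨j, rfl⟩ := hk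
      exact ⟨j, hcol j⟩
  have hli : LinearIndependent ℝ (fun k : S => w (k : Fin r)) := by
    rw [Fintype.linearIndependent_iff]
    intro g hg k
    obtain ⟨i, -, hi⟩ := Finset.mem_image.mp k.2
    have := congrFun hg i
    simp only [Finset.sum_apply, Pi.smul_apply, Pi.zero_apply, smul_eq_mul] at this
    rw [Finset.sum_eq_single k] at this
    · have hwk : w (k : Fin r) i = p i / s (γ i) := by
        simp [hw, hi]
      rw [hwk] at this
      have : g k * (p i / s (γ i)) = 0 := this
      rcases mul_eq_zero.mp this with h | h
      · exact h
      · exact absurd h (ne_of_gt (div_pos (hp i) (hs_pos i)))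
    · intro b _ hb
      have : γ i ≠ (b : Fin r) := fun e => hb (Subtype.ext (e ▸ hi ▸ rfl))
      simp [hw, this]
    · intro h
      exact absurd (Finset.mem_univ k) h
  have hrank : (dbmrProj p γ).rank = S.card := by
    rw [Matrix.rank_eq_finrank_span_cols, show (dbmrProj p γ).col = (dbmrProj p γ)ᵀ from rfl, hrange]
    have himg : w '' (S : Set (Fin r)) = Set.range (fun k : S => w (k : Fin r)) := by
      rw [Set.image_eq_range]; rfl
    rw [himg, finrank_span_eq_card hli, Fintype.card_coe]
  refine ⟨hrank, ?_⟩
  rw [hrank]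
  calc S.card ≤ Fintype.card (Fin r) := Finset.card_le_univ S
    _ = r := Fintype.card_fin r
end

section
/- Let P ∈ ℝ^{m×n} be a left stochastic matrix, p ∈ ℝⁿ a strictly positive probability vector, q = Pp strictly positive, and set P̃ = D_q^{-1/2} P D_p^{1/2}. Then the largest singular value of P̃ equals 1, with right singular vector p^{1/2} = (√p₁, …, √p_n)ᵀ and left singular vector q^{1/2}. -/
open Finset Matrix

theorem leading_singular_value_one {m n : ℕ} (P : Matrix (Fin m) (Fin n) ℝ)
    (hP0 : ∀ i j, 0 ≤ P i j) (hP1 : ∀ j, ∑ i, P i j = 1)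
    (p : Fin n → ℝ) (hp : ∀ j, 0 < p j) (hp1 : ∑ j, p j = 1)
    (hq : ∀ i, 0 < P.mulVec p i) :
    let q : Fin m → ℝ := P.mulVec p
    let Pt : Matrix (Fin m) (Fin n) ℝ := fun i j => P i j * Real.sqrt (p j) / Real.sqrt (q i)
    (∀ x : Fin n → ℝ, ∑ j, x j ^ 2 = 1 →
        Real.sqrt (∑ i, (Pt.mulVec x i) ^ 2) ≤ 1) ∧
      Pt.mulVec (fun j => Real.sqrt (p j)) = (fun i => Real.sqrt (q i)) ∧
      Ptᵀ.mulVec (fun i => Real.sqrt (q i)) = (fun j => Real.sqrt (p j)) := by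
  intro q Pt
  have hqpos : ∀ i, (0:ℝ) < q i := hq
  have hqsq : ∀ i, Real.sqrt (q i) ^ 2 = q i := fun i => Real.sq_sqrt (hqpos i).le
  have hqsqpos : ∀ i, (0:ℝ) < Real.sqrt (q i) := fun i => Real.sqrt_pos.2 (hqpos i)
  have hmul : ∀ x : Fin n → ℝ, ∀ i,
      Pt.mulVec x i = (∑ j, P i j * Real.sqrt (p j) * x j) / Real.sqrt (q i) := by
    intro x i
    simp only [Pt, Matrix.mulVec, dotProduct]
    rw [Finset.sum_div]
    exact Finset.sum_congr rfl fun j _ => by ring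
  refine ⟨?_, ?_, ?_⟩
  · intro x hx
    have hsum : ∑ i, (Pt.mulVec x i) ^ 2 ≤ 1 := by
      have key : ∀ i, (Pt.mulVec x i) ^ 2 ≤ ∑ j, P i j * x j ^ 2 := by
        intro i
        rw [hmul, div_pow, hqsq]
        rw [div_le_iff₀ (hqpos i)]
        calc (∑ j, P i j * Real.sqrt (p j) * x j) ^ 2
            = (∑ j, (Real.sqrt (P i j) * Real.sqrt (p j)) * (Real.sqrt (P i j) * x j)) ^ 2 := by
              congr 1
              refine Finset.sum_congr rfl fun j _ => ?_
              rw [show Real.sqrt (P i j) * Real.sqrt (p j) * (Real.sqrt (P i j) * x j)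
                  = (Real.sqrt (P i j) * Real.sqrt (P i j)) * Real.sqrt (p j) * x j by ring,
                Real.mul_self_sqrt (hP0 i j)]
          _ ≤ (∑ j, (Real.sqrt (P i j) * Real.sqrt (p j)) ^ 2) *
                ∑ j, (Real.sqrt (P i j) * x j) ^ 2 :=
              Finset.sum_mul_sq_le_sq_mul_sq _ _ _
          _ = (∑ j, P i j * p j) * ∑ j, P i j * x j ^ 2 := by
              congr 1
              · refine Finset.sum_congr rfl fun j _ => ?_
                rw [mul_pow, Real.sq_sqrt (hP0 i j), Real.sq_sqrt (hp j).le]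
              · refine Finset.sum_congr rfl fun j _ => ?_
                rw [mul_pow, Real.sq_sqrt (hP0 i j)]
          _ = (∑ j, P i j * x j ^ 2) * q i := by
              rw [mul_comm]; rfl
      calc ∑ i, (Pt.mulVec x i) ^ 2 ≤ ∑ i, ∑ j, P i j * x j ^ 2 :=
            Finset.sum_le_sum fun i _ => key i
        _ = ∑ j, (∑ i, P i j) * x j ^ 2 := by
            rw [Finset.sum_comm]
            exact Finset.sum_congr rfl fun j _ => by rw [Finset.sum_mul]
        _ = 1 := by
            rw [← hx]
            exact Finset.sum_congr rfl fun j _ => by rw [hP1 j, one_mul]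
    calc Real.sqrt (∑ i, (Pt.mulVec x i) ^ 2) ≤ Real.sqrt 1 := Real.sqrt_le_sqrt hsum
      _ = 1 := Real.sqrt_one
  · funext i
    rw [hmul]
    have h1 : (∑ j, P i j * Real.sqrt (p j) * Real.sqrt (p j)) = ∑ j, P i j * p j :=
      Finset.sum_congr rfl fun j _ => by
        rw [mul_assoc, Real.mul_self_sqrt (hp j).le]
    have h2 : (∑ j, P i j * p j) = q i := rfl
    rw [h1, h2, Real.div_sqrt]
  · funext j
    simp only [Pt, Matrix.mulVec, dotProduct, Matrix.transpose_apply]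
    have : ∀ i, P i j * Real.sqrt (p j) / Real.sqrt (q i) * Real.sqrt (q i)
        = P i j * Real.sqrt (p j) := fun i =>
      div_mul_cancel₀ _ (hqsqpos i).ne'
    change ∑ i, P i j * Real.sqrt (p j) / Real.sqrt (q i) * Real.sqrt (q i) = Real.sqrt (p j)
    rw [Finset.sum_congr rfl fun i _ => this i, ← Finset.sum_mul, hP1 j, one_mul]
end

section
/- Let P, Λ ∈ ℝ^{m×n} be left stochastic matrices, p ∈ ℝⁿ a strictly positive probability vector and q ∈ ℝ^m a strictly positive probability vector, and set P̃ = D_q^{-1/2} P D_p^{1/2}, Λ̃ = D_q^{-1/2} Λ D_p^{1/2}. Then ‖P̃ - Λ̃‖_F² ≤ (2 / minᵢ qᵢ) · Σⱼ pⱼ D_KL(P_{·j} ‖ Λ_{·j}), where P_{·j}, Λ_{·j} denote the j-th columns and D_KL is the Kullback–Leibler divergence between probability vectors. -/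
open Finset

lemma lem1 (x : ℝ) (hx : 1 ≤ x) : Real.log x ≤ (x - 1/x)/2 := by
  have key : MonotoneOn (fun x : ℝ => (x - x⁻¹)/2 - Real.log x) (Set.Ici 1) := by
    apply monotoneOn_of_hasDerivWithinAt_nonneg (convex_Ici 1)
      (f' := fun y => (y-1)^2/(2*y^2))
    · apply ContinuousOn.sub
      · apply ContinuousOn.div_const
        exact continuousOn_id.sub (ContinuousOn.inv₀ continuousOn_id
          (fun y hy => by simp at hy; intro h; rw [h] at hy; linarith))
      · apply Real.continuousOn_log.mono
        intro y hy; simp at hy ⊢; linarith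
    · intro y hy
      rw [interior_Ici] at hy
      have hy0 : (0:ℝ) < y := lt_trans one_pos hy
      have hd := (((hasDerivAt_id y).sub
        ((hasDerivAt_id y).inv hy0.ne')).div_const 2).sub (Real.hasDerivAt_log hy0.ne')
      simp only [id_eq] at hd
      have h1 : HasDerivAt (fun x : ℝ => (x - x⁻¹)/2 - Real.log x)
          ((y-1)^2/(2*y^2)) y := by
        refine hd.congr_deriv ?_
        field_simp; ring
      exact h1.hasDerivWithinAt
    · intro y hy; positivity
  have h := key (Set.self_mem_Ici) (Set.mem_Ici.2 hx) hx
  simp only [Real.log_one, inv_one] at h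
  rw [one_div]
  norm_num at h
  linarith

lemma log_lb (x : ℝ) (hx : 0 < x) : 1 - x⁻¹ ≤ Real.log x :=
  Real.one_sub_inv_le_log_of_pos hx

lemma lem2 (t : ℝ) (ht : 1 ≤ t) : (t-1)^2/(2*t) ≤ t * Real.log t - t + 1 := by
  have key : MonotoneOn (fun t : ℝ => t * Real.log t - t + 1 - (t-1)^2/(2*t)) (Set.Ici 1) := by
    apply monotoneOn_of_hasDerivWithinAt_nonneg (convex_Ici 1)
      (f' := fun y => Real.log y - (1 - y⁻¹^2)/2)
    · apply ContinuousOn.sub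
      · apply ContinuousOn.add
        · apply ContinuousOn.sub _ continuousOn_id
          exact continuousOn_id.mul (Real.continuousOn_log.mono
            (fun y hy => by simp at hy ⊢; linarith))
        · exact continuousOn_const
      · exact ContinuousOn.div (by fun_prop) (by fun_prop)
          (fun y hy => by simp at hy; positivity)
    · intro y hy
      rw [interior_Ici] at hy
      have hy0 : (0:ℝ) < y := lt_trans one_pos hy
      have hmul : HasDerivAt (fun t : ℝ => t * Real.log t)
          (1 * Real.log y + y * y⁻¹) y :=
        (hasDerivAt_id y).mul (Real.hasDerivAt_log hy0.ne')
      have hq : HasDerivAt (fun t : ℝ => (t-1)^2/(2*t))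
          ((2*(y-1)*(2*y) - (y-1)^2*2)/(2*y)^2) y := by
        have hnum : HasDerivAt (fun t : ℝ => (t-1)^2) (2*(y-1)) y := by
          have := ((hasDerivAt_id y).sub_const 1).pow 2
          simp at this; exact this
        have hden : HasDerivAt (fun t : ℝ => 2*t) 2 y := by
          simpa using (hasDerivAt_id y).const_mul 2
        exact hnum.div hden (by positivity)
      have hd := ((hmul.sub (hasDerivAt_id y)).add_const 1).sub hq
      have h1 : HasDerivAt (fun t : ℝ => t * Real.log t - t + 1 - (t-1)^2/(2*t))
          (Real.log y - (1 - y⁻¹^2)/2) y := by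
        refine hd.congr_deriv ?_
        field_simp; ring
      exact h1.hasDerivWithinAt
    · intro y hy
      rw [interior_Ici] at hy
      have hy0 : (0:ℝ) < y := lt_trans one_pos hy
      have hlb := log_lb y hy0
      have h2 : (1 - y⁻¹) - (1 - y⁻¹^2)/2 = (1-y⁻¹)^2/2 := by ring
      nlinarith [sq_nonneg (1 - y⁻¹)]
  have h := key (Set.self_mem_Ici) (Set.mem_Ici.2 ht) ht
  simp only [Real.log_one] at h
  norm_num at h
  linarith

lemma pointwiseKL (u v : ℝ) (hu0 : 0 ≤ u) (hu1 : u ≤ 1) (hv0 : 0 ≤ v) (hv1 : v ≤ 1)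
    (hac : v = 0 → u = 0) : (u - v)^2/2 ≤ u * Real.log (u/v) - u + v := by
  rcases eq_or_lt_of_le hv0 with hv | hv
  · have hu : u = 0 := hac hv.symm
    simp [hu, ← hv]
  rcases eq_or_lt_of_le hu0 with hu | hu
  · simp [← hu]; nlinarith
  rcases le_total u v with huv | huv
  · -- u ≤ v : use lem1 with x = v/u
    have h1 : Real.log v - Real.log u ≤ (v/u - u/v)/2 := by
      have h := lem1 (v/u) (by rw [le_div_iff₀ hu]; linarith)
      rwa [Real.log_div hv.ne' hu.ne', one_div, inv_div] at h
    have h2 : u * (Real.log v - Real.log u) ≤ u * ((v/u - u/v)/2) :=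
      mul_le_mul_of_nonneg_left h1 hu0
    have h3 : u * ((v/u - u/v)/2) = (v - u^2/v)/2 := by field_simp
    have h4 : (u^2/v - v)/2 - u + v = (u-v)^2/(2*v) := by field_simp; ring
    have h5 : (u-v)^2/2 ≤ (u-v)^2/(2*v) :=
      div_le_div_of_nonneg_left (sq_nonneg _) (by linarith) (by linarith)
    rw [Real.log_div hu.ne' hv.ne']
    linarith
  · -- v ≤ u : use lem2 with t = u/v
    have h1 := lem2 (u/v) (by rw [le_div_iff₀ hv]; linarith)
    have h2 : v * ((u/v-1)^2/(2*(u/v))) ≤ v * ((u/v) * Real.log (u/v) - u/v + 1) :=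
      mul_le_mul_of_nonneg_left h1 hv0
    have h3 : v * ((u/v-1)^2/(2*(u/v))) = (u-v)^2/(2*u) := by field_simp
    have h4 : v * ((u/v) * Real.log (u/v) - u/v + 1) = u * Real.log (u/v) - u + v := by
      field_simp
    have h5 : (u-v)^2/2 ≤ (u-v)^2/(2*u) :=
      div_le_div_of_nonneg_left (sq_nonneg _) (by linarith) (by linarith)
    linarith

lemma colKL {m : ℕ} (u v : Fin m → ℝ) (hu0 : ∀ i, 0 ≤ u i) (hu1 : ∑ i, u i = 1)
    (hv0 : ∀ i, 0 ≤ v i) (hv1 : ∑ i, v i = 1) (hac : ∀ i, v i = 0 → u i = 0) :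
    ∑ i, (u i - v i)^2 ≤ 2 * ∑ i, u i * Real.log (u i / v i) := by
  have hub : ∀ i, u i ≤ 1 := fun i => hu1 ▸ Finset.single_le_sum (fun j _ => hu0 j) (mem_univ i)
  have hvb : ∀ i, v i ≤ 1 := fun i => hv1 ▸ Finset.single_le_sum (fun j _ => hv0 j) (mem_univ i)
  have h := Finset.sum_le_sum (fun i (_ : i ∈ univ) =>
    pointwiseKL (u i) (v i) (hu0 i) (hub i) (hv0 i) (hvb i) (hac i))
  simp only [Finset.sum_sub_distrib, Finset.sum_add_distrib, hu1, hv1, ← Finset.sum_div] at h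
  linarith

lemma coe_sumE {k : ℕ} (f : Fin k → ℝ) : ((∑ i, f i : ℝ) : EReal) = ∑ i, (f i : EReal) :=
  map_sum (⟨⟨(↑· : ℝ → EReal), EReal.coe_zero⟩, fun x y => EReal.coe_add x y⟩ : ℝ →+ EReal)
    f Finset.univ


theorem frobenius_kl_apriori_bound {m n : ℕ}
    (P Λ : Matrix (Fin m) (Fin n) ℝ)
    (hP0 : ∀ i j, 0 ≤ P i j) (hP1 : ∀ j, ∑ i, P i j = 1)
    (hΛ0 : ∀ i j, 0 ≤ Λ i j) (hΛ1 : ∀ j, ∑ i, Λ i j = 1)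
    (p : Fin n → ℝ) (hp : ∀ j, 0 < p j) (hp1 : ∑ j, p j = 1)
    (q : Fin m → ℝ) (hq : ∀ i, 0 < q i) (hq1 : ∑ i, q i = 1) :
    ((∑ i, ∑ j, (P i j * Real.sqrt (p j) / Real.sqrt (q i)
        - Λ i j * Real.sqrt (p j) / Real.sqrt (q i)) ^ 2 : ℝ) : EReal)
      ≤ ((2 / (⨅ i, q i) : ℝ) : EReal) *
          ∑ j, ((p j : ℝ) : EReal) * klE (fun i => P i j) (fun i => Λ i j) := by
  -- m is positive
  rcases Nat.eq_zero_or_pos m with hm | hm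
  · subst hm; simp at hq1
  have hne : Nonempty (Fin m) := ⟨⟨0, hm⟩⟩
  -- infimum of q
  set qm : ℝ := ⨅ i, q i with hqm
  obtain ⟨i₀, hi₀⟩ := Finite.exists_min q
  have hqm_le : ∀ i, qm ≤ q i := fun i => ciInf_le (Finite.bddBelow_range q) i
  have hqm_pos : 0 < qm := lt_of_lt_of_le (hq i₀) (le_ciInf hi₀)
  -- KL nonnegativity per column (when AC)
  have hKnn : ∀ j, (∀ i, Λ i j = 0 → P i j = 0) →
      0 ≤ ∑ i, P i j * Real.log (P i j / Λ i j) := by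
    intro j hj
    have h := colKL (fun i => P i j) (fun i => Λ i j) (fun i => hP0 i j) (hP1 j)
      (fun i => hΛ0 i j) (hΛ1 j) hj
    have h0 : (0:ℝ) ≤ ∑ i, ((fun i => P i j) i - (fun i => Λ i j) i)^2 :=
      Finset.sum_nonneg fun i _ => sq_nonneg _
    simp only at h h0
    linarith
  by_cases hAC : ∀ j, ∀ i, Λ i j = 0 → P i j = 0
  · -- all columns absolutely continuous: reduce to a real inequality
    have hkl : ∀ j, klE (fun i => P i j) (fun i => Λ i j)
        = ((∑ i, P i j * Real.log (P i j / Λ i j) : ℝ) : EReal) := by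
      intro j; rw [klE, if_pos (hAC j)]
    have hsum : ∑ j, ((p j : ℝ) : EReal) * klE (fun i => P i j) (fun i => Λ i j)
        = ((∑ j, p j * ∑ i, P i j * Real.log (P i j / Λ i j) : ℝ) : EReal) := by
      rw [coe_sumE]
      exact Finset.sum_congr rfl fun j _ => by rw [hkl j, ← EReal.coe_mul]
    rw [hsum, ← EReal.coe_mul, EReal.coe_le_coe_iff]
    -- real inequality
    have key : ∀ i j, (P i j * Real.sqrt (p j) / Real.sqrt (q i)
        - Λ i j * Real.sqrt (p j) / Real.sqrt (q i)) ^ 2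
        = (P i j - Λ i j)^2 * p j / q i := by
      intro i j
      rw [div_sub_div_same, div_pow, Real.sq_sqrt (hq i).le]
      congr 1
      rw [show P i j * Real.sqrt (p j) - Λ i j * Real.sqrt (p j)
          = (P i j - Λ i j) * Real.sqrt (p j) by ring, mul_pow, Real.sq_sqrt (hp j).le]
    simp only [key]
    rw [Finset.sum_comm]
    have step1 : ∀ j, ∑ i, (P i j - Λ i j)^2 * p j / q i
        ≤ (2 / qm) * (p j * ∑ i, P i j * Real.log (P i j / Λ i j)) := by
      intro j
      have s1 : ∑ i, (P i j - Λ i j)^2 * p j / q i ≤ ∑ i, (P i j - Λ i j)^2 * p j / qm := by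
        apply Finset.sum_le_sum
        intro i _
        exact div_le_div_of_nonneg_left (mul_nonneg (sq_nonneg _) (hp j).le) hqm_pos (hqm_le i)
      have s2 : ∑ i, (P i j - Λ i j)^2 * p j / qm
          = (p j / qm) * ∑ i, (P i j - Λ i j)^2 := by
        rw [Finset.mul_sum]; exact Finset.sum_congr rfl fun i _ => by ring
      have s3 := colKL (fun i => P i j) (fun i => Λ i j) (fun i => hP0 i j) (hP1 j)
        (fun i => hΛ0 i j) (hΛ1 j) (hAC j)
      have s4 : (p j / qm) * ∑ i, (P i j - Λ i j)^2
          ≤ (p j / qm) * (2 * ∑ i, P i j * Real.log (P i j / Λ i j)) :=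
        mul_le_mul_of_nonneg_left s3 (div_nonneg (hp j).le hqm_pos.le)
      have s5 : (p j / qm) * (2 * ∑ i, P i j * Real.log (P i j / Λ i j))
          = (2 / qm) * (p j * ∑ i, P i j * Real.log (P i j / Λ i j)) := by ring
      linarith
    calc ∑ j, ∑ i, (P i j - Λ i j)^2 * p j / q i
        ≤ ∑ j, (2 / qm) * (p j * ∑ i, P i j * Real.log (P i j / Λ i j)) :=
          Finset.sum_le_sum fun j _ => step1 j
      _ = (2 / qm) * ∑ j, p j * ∑ i, P i j * Real.log (P i j / Λ i j) := by
          rw [Finset.mul_sum]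
  · -- some column not AC: right-hand side is ⊤
    push_neg at hAC
    obtain ⟨j₀, hj₀⟩ := hAC
    have hj₀' : ¬ ∀ i, Λ i j₀ = 0 → P i j₀ = 0 := by
      obtain ⟨i, h1, h2⟩ := hj₀; exact fun h => h2 (h i h1)
    have hterm : ∀ j ∈ univ, (0:EReal) ≤ (p j : EReal) * klE (fun i => P i j) (fun i => Λ i j) := by
      intro j _
      by_cases hj : ∀ i, Λ i j = 0 → P i j = 0
      · rw [klE, if_pos hj, ← EReal.coe_mul]
        exact_mod_cast mul_nonneg (hp j).le (hKnn j hj)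
      · rw [klE, if_neg hj, EReal.mul_top_of_pos (EReal.coe_pos.2 (hp j))]
        exact le_top
    have htop : ∑ j, ((p j : ℝ) : EReal) * klE (fun i => P i j) (fun i => Λ i j) = ⊤ := by
      apply top_le_iff.1
      have := Finset.single_le_sum hterm (mem_univ j₀)
      rwa [klE, if_neg hj₀', EReal.mul_top_of_pos (EReal.coe_pos.2 (hp j₀))] at this
    rw [htop, EReal.mul_top_of_pos (EReal.coe_pos.2 (by positivity))]
    exact le_top
end
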